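/- In a random k-sets design with n clones, each independently positive with probability c/n, the expected number of unresolved negative clones equals N̄ = Σ_{p=0}^{n} (n-p) B(n,p,c/n) Σ_{i=0}^{k} C(k,i) (-1)^i z_i^p, where z_i = C(v-i,k)/C(v,k) and B(a,b,t) = C(a,b) t^b (1-t)^{a-b}. -/

import Mathlib

open scoped Classical
open Finset

abbrev KSet (v k : ℕ) := {s : Finset (Fin v) // s.card = k}

/-- Probability weight of an outcome `ω = (S, pos)` in the model where each of `n` clones
independently occupies a uniformly random `k`-subset of `v` pools and is independently
positive with probability `c/n`. -/
noncomputable def outcomeWeight (v k n : ℕ) (c : ℝ)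
    (ω : (Fin n → KSet v k) × (Fin n → Bool)) : ℝ :=
  (∏ i : Fin n, (if ω.2 i then c / n else 1 - c / n)) /
    ((Fintype.card (KSet v k) : ℝ)) ^ n

/-- The number of unresolved negative clones: negative clones all of whose pools contain
some positive clone. -/
noncomputable def unresolvedNegCount (v k n : ℕ)
    (ω : (Fin n → KSet v k) × (Fin n → Bool)) : ℕ :=
  (Finset.univ.filter (fun i : Fin n =>
    ω.2 i = false ∧ ∀ x ∈ (ω.1 i).1, ∃ j : Fin n, ω.2 j = true ∧ x ∈ (ω.1 j).1)).card

/-- Binomial probabilities `B(a,b,t) = C(a,b) t^b (1-t)^{a-b}`. -/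
noncomputable def B (a b : ℕ) (t : ℝ) : ℝ := (a.choose b : ℝ) * t ^ b * (1 - t) ^ (a - b)

lemma kset_card (v k : ℕ) : Fintype.card (KSet v k) = v.choose k := by
  simp [Fintype.card_finset_len (α := Fin v) k]

lemma aux_card_disjoint (v k : ℕ) (T : Finset (Fin v)) :
    (Finset.univ.filter fun s : KSet v k => ∀ x ∈ T, x ∉ s.1).card
      = (v - T.card).choose k := by
  have h : (Finset.univ.filter fun s : KSet v k => ∀ x ∈ T, x ∉ s.1).card
      = (Finset.powersetCard k Tᶜ).card := by
    apply Finset.card_bij (fun s _ => s.1)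
    · intro s hs
      simp only [Finset.mem_filter, Finset.mem_univ, true_and] at hs
      rw [Finset.mem_powersetCard]
      refine ⟨fun x hx => ?_, s.2⟩
      rw [Finset.mem_compl]
      intro hxT
      exact hs x hxT hx
    · intro a _ c _ h; exact Subtype.ext h
    · intro u hu
      rw [Finset.mem_powersetCard] at hu
      refine ⟨⟨u, hu.2⟩, ?_, rfl⟩
      simp only [Finset.mem_filter, Finset.mem_univ, true_and]
      intro x hxT hxu
      exact (Finset.mem_compl.mp (hu.1 hxu)) hxT
  rw [h, Finset.card_powersetCard, Finset.card_compl, Fintype.card_fin]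

lemma myProdCount {ι : Type*} [Fintype ι] (q : ι → Prop) [DecidablePred q] (A C : ℝ) :
    (∏ j, if q j then A else C)
      = A ^ (Finset.univ.filter q).card
        * C ^ (Fintype.card ι - (Finset.univ.filter q).card) := by
  rw [Finset.prod_ite (fun _ => A) (fun _ => C), Finset.prod_const, Finset.prod_const]
  congr 1
  rw [← Finset.card_compl]
  congr 1
  apply congrArg Finset.card
  ext x
  simp

lemma myProdInd {α : Type*} (s : Finset α) (P : α → Prop) [DecidablePred P]
    [hd : Decidable (∀ x ∈ s, P x)] :
    (∏ x ∈ s, if P x then (1:ℝ) else 0) = if ∀ x ∈ s, P x then 1 else 0 := by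
  by_cases hc : ∀ x ∈ s, P x
  · rw [if_pos hc, Finset.prod_congr rfl (fun x hx => if_pos (hc x hx)), Finset.prod_const_one]
  · rw [if_neg hc]
    push_neg at hc
    obtain ⟨x, hx, hcx⟩ := hc
    exact Finset.prod_eq_zero hx (if_neg hcx)

lemma aux_incl_excl {v : ℕ} (s₀ : Finset (Fin v)) (cov : Fin v → Prop) [DecidablePred cov]
    [hd : Decidable (∀ x ∈ s₀, cov x)]
    [hd2 : ∀ T : Finset (Fin v), Decidable (∀ x ∈ T, ¬ cov x)] :
    (if ∀ x ∈ s₀, cov x then (1:ℝ) else 0)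
      = ∑ T ∈ s₀.powerset, (-1 : ℝ) ^ T.card * (if ∀ x ∈ T, ¬ cov x then 1 else 0) := by
  rw [myProdInd s₀ cov (hd := hd) |>.symm]
  have h : ∀ x ∈ s₀, (if cov x then (1:ℝ) else 0)
      = (if ¬ cov x then (-1:ℝ) else 0) + 1 := by
    intro x _; by_cases h : cov x <;> simp [h]
  rw [Finset.prod_congr rfl h, Finset.prod_add]
  refine Finset.sum_congr rfl fun T hT => ?_
  rw [Finset.prod_const_one, mul_one]
  have h2 : ∀ x ∈ T, (if ¬ cov x then (-1:ℝ) else 0)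
      = (-1) * (if ¬ cov x then 1 else 0) := by
    intro x _; by_cases h : cov x <;> simp [h]
  rw [Finset.prod_congr rfl h2, Finset.prod_mul_distrib, Finset.prod_const,
    myProdInd T (fun x => ¬ cov x)]

lemma filter_subtype_card {n : ℕ} (b : Fin n → Bool) (i₀ : Fin n) (hb : b i₀ = false) :
    (Finset.univ.filter fun j : {j : Fin n // j ≠ i₀} => b j.1 = true).card
      = (Finset.univ.filter fun j : Fin n => b j = true).card := by
  apply Finset.card_bij (fun j _ => j.1)
  · intro j hj
    simp only [Finset.mem_filter, Finset.mem_univ, true_and] at hj ⊢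
    exact hj
  · intro a _ c _ h; exact Subtype.ext h
  · intro j hj
    simp only [Finset.mem_filter, Finset.mem_univ, true_and] at hj
    have hne : j ≠ i₀ := by rintro rfl; rw [hb] at hj; exact Bool.false_ne_true hj
    exact ⟨⟨j, hne⟩, by simp [hj], rfl⟩

lemma key_inner (v k n : ℕ) (b : Fin n → Bool) (i₀ : Fin n) (hb : b i₀ = false) :
    (∑ S : Fin n → KSet v k,
        if (∀ x ∈ (S i₀).1, ∃ j : Fin n, b j = true ∧ x ∈ (S j).1) then (1:ℝ) else 0)
      = (v.choose k : ℝ) ^ (n - (Finset.univ.filter fun j : Fin n => b j = true).card) *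
          ∑ t ∈ Finset.range (k + 1),
            (k.choose t : ℝ) * (-1) ^ t *
              ((v - t).choose k : ℝ) ^ (Finset.univ.filter fun j : Fin n => b j = true).card := by
  classical
  set p := (Finset.univ.filter fun j : Fin n => b j = true).card with hp
  have hi₀ : i₀ ∉ (Finset.univ.filter fun j : Fin n => b j = true) := by simp [hb]
  have hpn : p < n := by
    have h1 : p ≤ (Finset.univ.erase i₀).card :=
      Finset.card_le_card (fun j hj => Finset.mem_erase.mpr
        ⟨fun h => hi₀ (h ▸ hj), Finset.mem_univ j⟩)
    have h2 : (Finset.univ.erase i₀).card = n - 1 := by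
      rw [Finset.card_erase_of_mem (Finset.mem_univ i₀), Finset.card_univ, Fintype.card_fin]
    have h3 : 0 < n := i₀.pos
    omega
  have hsub_card : Fintype.card {j : Fin n // j ≠ i₀} = n - 1 := by
    rw [Fintype.card_subtype_compl, Fintype.card_fin, Fintype.card_subtype_eq]
  have hsub_p : (Finset.univ.filter fun j : {j : Fin n // j ≠ i₀} => b j.1 = true).card = p :=
    filter_subtype_card b i₀ hb
  have heval1 : ∀ (s₀ : KSet v k) (r : {j : Fin n // j ≠ i₀} → KSet v k),
      (Equiv.funSplitAt i₀ (KSet v k)).symm (s₀, r) i₀ = s₀ := by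
    intro s₀ r
    simp [Equiv.funSplitAt, Equiv.piSplitAt]
  have heval2 : ∀ (s₀ : KSet v k) (r : {j : Fin n // j ≠ i₀} → KSet v k) (j : Fin n)
      (h : j ≠ i₀), (Equiv.funSplitAt i₀ (KSet v k)).symm (s₀, r) j = r ⟨j, h⟩ := by
    intro s₀ r j h
    simp [Equiv.funSplitAt, Equiv.piSplitAt, h]
  rw [← Equiv.sum_comp (Equiv.funSplitAt i₀ (KSet v k)).symm
    (fun S => if (∀ x ∈ (S i₀).1, ∃ j : Fin n, b j = true ∧ x ∈ (S j).1) then (1:ℝ) else 0)]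
  rw [Fintype.sum_prod_type]
  have hcond : ∀ (s₀ : KSet v k) (r : {j : Fin n // j ≠ i₀} → KSet v k),
      ((∀ x ∈ (((Equiv.funSplitAt i₀ (KSet v k)).symm (s₀, r)) i₀).1,
          ∃ j : Fin n, b j = true ∧ x ∈ (((Equiv.funSplitAt i₀ (KSet v k)).symm (s₀, r)) j).1)
        ↔ (∀ x ∈ s₀.1, ∃ j' : {j : Fin n // j ≠ i₀}, b j'.1 = true ∧ x ∈ (r j').1)) := by
    intro s₀ r
    rw [heval1]
    constructor
    · intro h x hx
      obtain ⟨j, hj, hxj⟩ := h x hx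
      have hne : j ≠ i₀ := by rintro rfl; rw [hb] at hj; exact Bool.false_ne_true hj
      rw [heval2 s₀ r j hne] at hxj
      exact ⟨⟨j, hne⟩, hj, hxj⟩
    · intro h x hx
      obtain ⟨j', hj', hxj⟩ := h x hx
      exact ⟨j'.1, hj', by rw [heval2 s₀ r j'.1 j'.2]; exact hxj⟩
  -- inner sum over r for a fixed T
  have hinner : ∀ T : Finset (Fin v),
      (∑ r : {j : Fin n // j ≠ i₀} → KSet v k,
        if (∀ x ∈ T, ¬ ∃ j' : {j : Fin n // j ≠ i₀}, b j'.1 = true ∧ x ∈ (r j').1)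
          then (1:ℝ) else 0)
      = ((v - T.card).choose k : ℝ) ^ p * (v.choose k : ℝ) ^ (n - 1 - p) := by
    intro T
    have hiff : ∀ r : {j : Fin n // j ≠ i₀} → KSet v k,
        ((∀ x ∈ T, ¬ ∃ j' : {j : Fin n // j ≠ i₀}, b j'.1 = true ∧ x ∈ (r j').1)
          ↔ (∀ j' : {j : Fin n // j ≠ i₀}, b j'.1 = true → ∀ x ∈ T, x ∉ (r j').1)) := by
      intro r
      constructor
      · intro h j' hj' x hx hxr
        exact (h x hx) ⟨j', hj', hxr⟩
      · rintro h x hx ⟨j', hj', hxr⟩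
        exact h j' hj' x hx hxr
    have step : ∀ r : {j : Fin n // j ≠ i₀} → KSet v k,
        (if (∀ x ∈ T, ¬ ∃ j' : {j : Fin n // j ≠ i₀}, b j'.1 = true ∧ x ∈ (r j').1)
          then (1:ℝ) else 0)
        = ∏ j' : {j : Fin n // j ≠ i₀},
            if (b j'.1 = true → ∀ x ∈ T, x ∉ (r j').1) then (1:ℝ) else 0 := by
      intro r
      rw [if_congr (hiff r) rfl rfl]
      by_cases hc : ∀ j' : {j : Fin n // j ≠ i₀}, b j'.1 = true → ∀ x ∈ T, x ∉ (r j').1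
      · rw [if_pos hc, Finset.prod_congr rfl (fun j' _ => if_pos (hc j')),
          Finset.prod_const_one]
      · rw [if_neg hc]
        obtain ⟨j', hj'⟩ := not_forall.mp hc
        symm
        apply Finset.prod_eq_zero (Finset.mem_univ j')
        exact if_neg hj'
    rw [Finset.sum_congr rfl (fun r _ => step r)]
    have hps := Finset.sum_prod_piFinset (Finset.univ : Finset (KSet v k))
      (fun (j' : {j : Fin n // j ≠ i₀}) (s : KSet v k) =>
        if (b j'.1 = true → ∀ x ∈ T, x ∉ s.1) then (1:ℝ) else 0)
    rw [Fintype.piFinset_univ] at hps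
    rw [hps]
    have hfac : ∀ j' : {j : Fin n // j ≠ i₀},
        (∑ s : KSet v k, if (b j'.1 = true → ∀ x ∈ T, x ∉ s.1) then (1:ℝ) else 0)
        = if b j'.1 = true then ((v - T.card).choose k : ℝ) else (v.choose k : ℝ) := by
      intro j'
      by_cases hbj : b j'.1 = true
      · rw [if_pos hbj]
        have : ∀ s : KSet v k,
            (if (b j'.1 = true → ∀ x ∈ T, x ∉ s.1) then (1:ℝ) else 0)
            = if (∀ x ∈ T, x ∉ s.1) then (1:ℝ) else 0 := by
          intro s
          exact if_congr ⟨fun h => h hbj, fun h _ => h⟩ rfl rfl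
        rw [Finset.sum_congr rfl (fun s _ => this s), Finset.sum_boole,
          aux_card_disjoint v k T]
      · rw [if_neg hbj]
        have : ∀ s : KSet v k,
            (if (b j'.1 = true → ∀ x ∈ T, x ∉ s.1) then (1:ℝ) else 0) = 1 := by
          intro s
          exact if_pos (fun h => absurd h hbj)
        rw [Finset.sum_congr rfl (fun s _ => this s), Finset.sum_const,
          Finset.card_univ, kset_card, nsmul_eq_mul, mul_one]
    rw [Finset.prod_congr rfl (fun j' _ => hfac j'),
      myProdCount (fun j' : {j : Fin n // j ≠ i₀} => b j'.1 = true) _ _,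
      hsub_p, hsub_card]
  -- now the double sum
  have hmain : ∀ s₀ : KSet v k,
      (∑ r : {j : Fin n // j ≠ i₀} → KSet v k,
        if (∀ x ∈ (((Equiv.funSplitAt i₀ (KSet v k)).symm (s₀, r)) i₀).1,
            ∃ j : Fin n, b j = true ∧ x ∈ (((Equiv.funSplitAt i₀ (KSet v k)).symm (s₀, r)) j).1)
          then (1:ℝ) else 0)
      = ∑ t ∈ Finset.range (k + 1),
          (k.choose t : ℝ) * ((-1) ^ t * (((v - t).choose k : ℝ) ^ p
            * (v.choose k : ℝ) ^ (n - 1 - p))) := by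
    intro s₀
    have e1 : ∀ r, (if (∀ x ∈ (((Equiv.funSplitAt i₀ (KSet v k)).symm (s₀, r)) i₀).1,
            ∃ j : Fin n, b j = true ∧ x ∈ (((Equiv.funSplitAt i₀ (KSet v k)).symm (s₀, r)) j).1)
          then (1:ℝ) else 0)
        = ∑ T ∈ s₀.1.powerset, (-1 : ℝ) ^ T.card *
            (if ∀ x ∈ T, ¬ ∃ j' : {j : Fin n // j ≠ i₀}, b j'.1 = true ∧ x ∈ (r j').1
              then (1:ℝ) else 0) := by
      intro r
      rw [if_congr (hcond s₀ r) rfl rfl]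
      exact aux_incl_excl s₀.1 _
    rw [Finset.sum_congr rfl (fun r _ => e1 r), Finset.sum_comm]
    have e2 : ∀ T ∈ s₀.1.powerset,
        (∑ r : {j : Fin n // j ≠ i₀} → KSet v k, (-1 : ℝ) ^ T.card *
          (if ∀ x ∈ T, ¬ ∃ j' : {j : Fin n // j ≠ i₀}, b j'.1 = true ∧ x ∈ (r j').1
            then (1:ℝ) else 0))
        = (-1 : ℝ) ^ T.card * (((v - T.card).choose k : ℝ) ^ p
            * (v.choose k : ℝ) ^ (n - 1 - p)) := by
      intro T _
      rw [← Finset.mul_sum, hinner T]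
    rw [Finset.sum_congr rfl e2]
    have := Finset.sum_powerset_apply_card
      (f := fun m : ℕ => (-1 : ℝ) ^ m * (((v - m).choose k : ℝ) ^ p
        * (v.choose k : ℝ) ^ (n - 1 - p))) (x := s₀.1)
    rw [this, s₀.2]
    refine Finset.sum_congr rfl fun t _ => ?_
    rw [nsmul_eq_mul]
  rw [Finset.sum_congr rfl (fun s₀ _ => hmain s₀), Finset.sum_const, Finset.card_univ,
    kset_card, nsmul_eq_mul]
  have hexp : n - p = (n - 1 - p) + 1 := by omega
  rw [hexp, pow_succ, Finset.mul_sum, Finset.mul_sum]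
  refine Finset.sum_congr rfl fun t _ => ?_
  ring

lemma sum_bool_vec (n : ℕ) (F : ℕ → ℝ) :
    (∑ b : Fin n → Bool, F ((Finset.univ.filter fun j => b j = true).card))
      = ∑ p ∈ Finset.range (n + 1), (n.choose p : ℝ) * F p := by
  classical
  let e : Finset (Fin n) ≃ (Fin n → Bool) :=
    { toFun := fun s j => decide (j ∈ s)
      invFun := fun b => Finset.univ.filter fun j => b j = true
      left_inv := fun s => by ext j; simp
      right_inv := fun b => by funext j; by_cases h : b j <;> simp [h] }
  rw [← Equiv.sum_comp e (fun b => F ((Finset.univ.filter fun j => b j = true).card))]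
  have hs : ∀ s : Finset (Fin n),
      ((Finset.univ.filter fun j => e s j = true)).card = s.card := by
    intro s; congr 1; ext j; simp [e]
  rw [Finset.sum_congr rfl (fun s _ => by rw [hs s])]
  rw [show (Finset.univ : Finset (Finset (Fin n))) = (Finset.univ : Finset (Fin n)).powerset
    from (Finset.powerset_univ).symm]
  rw [Finset.sum_powerset_apply_card]
  simp [Finset.card_univ, nsmul_eq_mul]

/-- the expected number of unresolved negative clones equals
`N̄ = Σ_{p=0}^{n} (n-p) B(n,p,c/n) Σ_{i=0}^{k} C(k,i) (-1)^i z_i^p`,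
where `z_i = C(v-i,k)/C(v,k)`. -/
theorem expected_unresolved_negatives (v k n : ℕ) (c : ℝ) (hk : k ≤ v)
    (hc0 : 0 ≤ c) (hcn : c ≤ n) :
    ∑ ω : (Fin n → KSet v k) × (Fin n → Bool),
        outcomeWeight v k n c ω * (unresolvedNegCount v k n ω : ℝ) =
      ∑ p ∈ Finset.range (n + 1),
        ((n : ℝ) - p) * B n p (c / n) *
          ∑ i ∈ Finset.range (k + 1),
            (k.choose i : ℝ) * (-1) ^ i * (((v - i).choose k : ℝ) / (v.choose k : ℝ)) ^ p := by
  classical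
  have hM : (0:ℝ) < (v.choose k : ℝ) := by exact_mod_cast Nat.choose_pos hk
  have hMne : ((v.choose k : ℝ)) ≠ 0 := ne_of_gt hM
  set G : ℕ → ℝ := fun p =>
    ((c / n) ^ p * (1 - c / n) ^ (n - p)) / (v.choose k : ℝ) ^ n
      * (((n - p : ℕ) : ℝ) * ((v.choose k : ℝ) ^ (n - p) *
          ∑ t ∈ Finset.range (k + 1),
            (k.choose t : ℝ) * (-1) ^ t * ((v - t).choose k : ℝ) ^ p)) with hG
  have hbv : ∀ bv : Fin n → Bool,
      (∑ S : Fin n → KSet v k,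
        outcomeWeight v k n c (S, bv) * (unresolvedNegCount v k n (S, bv) : ℝ))
      = G ((Finset.univ.filter fun j : Fin n => bv j = true).card) := by
    intro bv
    set p := (Finset.univ.filter fun j : Fin n => bv j = true).card with hp
    have hw : ∀ S : Fin n → KSet v k, outcomeWeight v k n c (S, bv)
        = ((c / n) ^ p * (1 - c / n) ^ (n - p)) / (v.choose k : ℝ) ^ n := by
      intro S
      unfold outcomeWeight
      rw [kset_card]
      congr 1
      rw [myProdCount (fun j : Fin n => bv j = true) (c / n) (1 - c / n), Fintype.card_fin]
    have h1 : ∀ S : Fin n → KSet v k, ((unresolvedNegCount v k n (S, bv)) : ℝ)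
        = ∑ i : Fin n, if (bv i = false ∧ ∀ x ∈ (S i).1,
            ∃ j : Fin n, bv j = true ∧ x ∈ (S j).1) then (1:ℝ) else 0 := by
      intro S
      unfold unresolvedNegCount
      rw [Finset.card_filter]
      push_cast
      rfl
    have h2 : ∀ i : Fin n,
        (∑ S : Fin n → KSet v k, if (bv i = false ∧ ∀ x ∈ (S i).1,
            ∃ j : Fin n, bv j = true ∧ x ∈ (S j).1) then (1:ℝ) else 0)
        = if bv i = false then ((v.choose k : ℝ) ^ (n - p) *
            ∑ t ∈ Finset.range (k + 1),
              (k.choose t : ℝ) * (-1) ^ t * ((v - t).choose k : ℝ) ^ p) else 0 := by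
      intro i
      by_cases hbi : bv i = false
      · rw [if_pos hbi]
        have := key_inner v k n bv i hbi
        rw [← this]
        refine Finset.sum_congr rfl fun S _ => ?_
        exact if_congr ⟨fun h => h.2, fun h => ⟨hbi, h⟩⟩ rfl rfl
      · rw [if_neg hbi]
        apply Finset.sum_eq_zero
        intro S _
        rw [if_neg]
        rintro ⟨h, _⟩
        exact hbi h
    have h4 : (Finset.univ.filter fun i : Fin n => bv i = false).card = n - p := by
      have hcompl : (Finset.univ.filter fun i : Fin n => bv i = false)
          = (Finset.univ.filter fun i : Fin n => bv i = true)ᶜ := by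
        ext i; by_cases h : bv i <;> simp [h]
      rw [hcompl, Finset.card_compl, Fintype.card_fin]
    calc (∑ S : Fin n → KSet v k,
            outcomeWeight v k n c (S, bv) * (unresolvedNegCount v k n (S, bv) : ℝ))
        = ((c / n) ^ p * (1 - c / n) ^ (n - p)) / (v.choose k : ℝ) ^ n
            * (∑ S : Fin n → KSet v k, ((unresolvedNegCount v k n (S, bv)) : ℝ)) := by
          rw [Finset.mul_sum]
          exact Finset.sum_congr rfl fun S _ => by rw [hw S]
      _ = ((c / n) ^ p * (1 - c / n) ^ (n - p)) / (v.choose k : ℝ) ^ n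
            * (((n - p : ℕ) : ℝ) * ((v.choose k : ℝ) ^ (n - p) *
              ∑ t ∈ Finset.range (k + 1),
                (k.choose t : ℝ) * (-1) ^ t * ((v - t).choose k : ℝ) ^ p)) := by
          congr 1
          rw [Finset.sum_congr rfl (fun S _ => h1 S), Finset.sum_comm,
            Finset.sum_congr rfl (fun i _ => h2 i)]
          rw [Finset.sum_ite (fun _ => ((v.choose k : ℝ) ^ (n - p) *
              ∑ t ∈ Finset.range (k + 1),
                (k.choose t : ℝ) * (-1) ^ t * ((v - t).choose k : ℝ) ^ p)) (fun _ => 0)]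
          rw [Finset.sum_const, Finset.sum_const_zero, add_zero, nsmul_eq_mul, h4]
      _ = G p := rfl
  rw [Fintype.sum_prod_type, Finset.sum_comm, Finset.sum_congr rfl (fun bv _ => hbv bv),
    sum_bool_vec n G]
  refine Finset.sum_congr rfl fun p hp => ?_
  rw [Finset.mem_range] at hp
  have hpn : p ≤ n := by omega
  have hcast : ((n - p : ℕ) : ℝ) = (n : ℝ) - p := by
    push_cast [hpn]; ring
  have hMn : (v.choose k : ℝ) ^ n = (v.choose k : ℝ) ^ (n - p) * (v.choose k : ℝ) ^ p := by
    rw [← pow_add]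
    congr 1
    omega
  have hsum : (∑ t ∈ Finset.range (k + 1),
        (k.choose t : ℝ) * (-1) ^ t * (((v - t).choose k : ℝ) / (v.choose k : ℝ)) ^ p)
      = (∑ t ∈ Finset.range (k + 1),
          (k.choose t : ℝ) * (-1) ^ t * ((v - t).choose k : ℝ) ^ p) / (v.choose k : ℝ) ^ p := by
    rw [Finset.sum_div]
    refine Finset.sum_congr rfl fun t _ => ?_
    rw [div_pow]
    ring
  simp only [hG, B]
  rw [hsum, hcast, hMn]
  have hMp : (v.choose k : ℝ) ^ p ≠ 0 := pow_ne_zero _ hMne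
  have hMnp : (v.choose k : ℝ) ^ (n - p) ≠ 0 := pow_ne_zero _ hMne
  have hnp : ((n : ℝ)) ^ p ≠ 0 := by
    rcases Nat.eq_zero_or_pos n with h0 | h0
    · have hp0 : p = 0 := by omega
      rw [hp0, pow_zero]
      exact one_ne_zero
    · exact pow_ne_zero _ (by exact_mod_cast h0.ne')
  field_simp
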